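/- If a twin-free graph G has a unit mixed interval representation, then G contains no induced copy of K_{2,4}*, the graph on vertices {p,q,r,s,t,z} where p is adjacent to q,r,s; t is adjacent to q,r,s,z; p,t are nonadjacent; q,r,s are pairwise nonadjacent; and z is adjacent only to t. -/
import Mathlib


variable {V : Type*}

/-- `s` is a length-1 real interval with endpoints `x` and `x+1`, each open or
closed. -/
def UnitIntervalAt (s : Set ℝ) (x : ℝ) : Prop :=
  s = Set.Icc x (x + 1) ∨ s = Set.Ico x (x + 1) ∨
    s = Set.Ioc x (x + 1) ∨ s = Set.Ioo x (x + 1)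

/-- A unit mixed interval representation of `G`. -/
def UnitMixedRep (G : SimpleGraph V) (I : V → Set ℝ) : Prop :=
  (∀ v, ∃ x : ℝ, UnitIntervalAt (I v) x) ∧
    ∀ u v : V, u ≠ v → (G.Adj u v ↔ (I u ∩ I v).Nonempty)

/-- `G` is twin-free: no two distinct vertices have the same closed
neighborhood. -/
def TwinFree (G : SimpleGraph V) : Prop :=
  ∀ u v : V, (∀ w, (G.Adj u w ∨ w = u) ↔ (G.Adj v w ∨ w = v)) → u = v

lemma UnitIntervalAt.subset_Icc {s : Set ℝ} {x : ℝ} (h : UnitIntervalAt s x) :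
    s ⊆ Set.Icc x (x + 1) := by
  rcases h with h | h | h | h <;> subst h
  · exact subset_rfl
  · exact Set.Ico_subset_Icc_self
  · exact Set.Ioc_subset_Icc_self
  · exact Set.Ioo_subset_Icc_self

lemma UnitIntervalAt.Ioo_subset {s : Set ℝ} {x : ℝ} (h : UnitIntervalAt s x) :
    Set.Ioo x (x + 1) ⊆ s := by
  rcases h with h | h | h | h <;> subst h
  · exact Set.Ioo_subset_Icc_self
  · exact Set.Ioo_subset_Ico_self
  · exact Set.Ioo_subset_Ioc_self
  · exact subset_rfl

/-- Disjoint unit intervals have base points at distance at least 1. -/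
lemma gap_of_disjoint {s t : Set ℝ} {x y : ℝ} (hs : UnitIntervalAt s x)
    (ht : UnitIntervalAt t y) (hd : ¬(s ∩ t).Nonempty) : 1 ≤ |x - y| := by
  by_contra h
  push_neg at h
  rw [abs_lt] at h
  exact hd ⟨(x + y + 1) / 2,
    hs.Ioo_subset ⟨by rcases le_total x y with h' | h' <;> linarith,
      by rcases le_total x y with h' | h' <;> linarith⟩,
    ht.Ioo_subset ⟨by rcases le_total x y with h' | h' <;> linarith,
      by rcases le_total x y with h' | h' <;> linarith⟩⟩

/-- Intersecting unit intervals have base points at distance at most 1. -/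
lemma close_of_inter {s t : Set ℝ} {x y : ℝ} (hs : UnitIntervalAt s x)
    (ht : UnitIntervalAt t y) (hd : (s ∩ t).Nonempty) : |x - y| ≤ 1 := by
  obtain ⟨a, has, hat⟩ := hd
  obtain ⟨h1, h2⟩ := hs.subset_Icc has
  obtain ⟨h3, h4⟩ := ht.subset_Icc hat
  rw [abs_le]; constructor <;> linarith

/-- A unit interval meeting two unit intervals whose bases are 2 apart must be
the closed interval in the middle. -/
lemma forced_Icc {sp sq ss : Set ℝ} {xp xq xs : ℝ}
    (hp : UnitIntervalAt sp xp) (hq : UnitIntervalAt sq xq)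
    (hs : UnitIntervalAt ss xs) (hgap : xq + 2 ≤ xs)
    (h1 : (sp ∩ sq).Nonempty) (h2 : (sp ∩ ss).Nonempty) :
    sp = Set.Icc (xq + 1) (xq + 2) := by
  have c1 := close_of_inter hp hq h1
  have c2 := close_of_inter hp hs h2
  rw [abs_le] at c1 c2
  have hxp : xp = xq + 1 := by linarith
  have hxs : xs = xq + 2 := by linarith
  subst hxp hxs
  obtain ⟨a, ha1, ha2⟩ := h1
  obtain ⟨b, hb1, hb2⟩ := h2
  have haI := hp.subset_Icc ha1
  have haq := hq.subset_Icc ha2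
  have hbI := hp.subset_Icc hb1
  have hbs := hs.subset_Icc hb2
  have hal : a = xq + 1 := le_antisymm haq.2 haI.1
  have hbl : b = xq + 2 := le_antisymm (by linarith [hbI.2]) hbs.1
  subst hal hbl
  rcases hp with h | h | h | h <;> subst h
  · congr 1; ring
  · exact absurd hb1.2 (by simp; linarith)
  · exact absurd ha1.1 (lt_irrefl _)
  · exact absurd ha1.1 (lt_irrefl _)

/-- A twin-free unit mixed interval graph contains no induced copy of
`K_{2,4}*`: nonadjacent centers `p, t` with common nonadjacent neighbors
`q, r, s`, plus a pendant `z` adjacent only to `t`. -/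
theorem unit_mixed_no_induced_K24star
    (G : SimpleGraph V) (htf : TwinFree G)
    (I : V → Set ℝ) (hrep : UnitMixedRep G I) :
    ¬ ∃ p q r s t z : V, List.Pairwise (· ≠ ·) [p, q, r, s, t, z] ∧
      G.Adj p q ∧ G.Adj p r ∧ G.Adj p s ∧
      G.Adj t q ∧ G.Adj t r ∧ G.Adj t s ∧ G.Adj t z ∧
      ¬G.Adj p t ∧ ¬G.Adj q r ∧ ¬G.Adj q s ∧ ¬G.Adj r s ∧
      ¬G.Adj p z ∧ ¬G.Adj q z ∧ ¬G.Adj r z ∧ ¬G.Adj s z := by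
  rintro ⟨p, q, r, s, t, z, hpw, hpq, hpr, hps, htq, htr, hts, htz, hpt, hqr,
    hqs, hrs, hpz, hqz, hrz, hsz⟩
  simp only [List.pairwise_cons, List.mem_cons, List.not_mem_nil] at hpw
  obtain ⟨hne1, hne2, hne3, hne4, _⟩ := hpw
  have hPQ : p ≠ q := hne1 q (by tauto)
  have hPR : p ≠ r := hne1 r (by tauto)
  have hPS : p ≠ s := hne1 s (by tauto)
  have hPT : p ≠ t := hne1 t (by tauto)
  have hQR : q ≠ r := hne2 r (by tauto)
  have hQS : q ≠ s := hne2 s (by tauto)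
  have hQT : q ≠ t := hne2 t (by tauto)
  have hRS : r ≠ s := hne3 s (by tauto)
  have hRT : r ≠ t := hne3 t (by tauto)
  have hST : s ≠ t := hne4 t (by tauto)
  obtain ⟨hx, hadj⟩ := hrep
  obtain ⟨xp, hxp⟩ := hx p
  obtain ⟨xq, hxq⟩ := hx q
  obtain ⟨xr, hxr⟩ := hx r
  obtain ⟨xs, hxs⟩ := hx s
  obtain ⟨xt, hxt⟩ := hx t
  -- nonempty intersections from adjacency
  have npq : (I p ∩ I q).Nonempty := (hadj p q hPQ).mp hpq
  have npr : (I p ∩ I r).Nonempty := (hadj p r hPR).mp hpr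
  have nps : (I p ∩ I s).Nonempty := (hadj p s hPS).mp hps
  have ntq : (I t ∩ I q).Nonempty := (hadj t q hQT.symm).mp htq
  have ntr : (I t ∩ I r).Nonempty := (hadj t r hRT.symm).mp htr
  have nts : (I t ∩ I s).Nonempty := (hadj t s hST.symm).mp hts
  have npt : ¬(I p ∩ I t).Nonempty := fun h => hpt ((hadj p t hPT).mpr h)
  -- gaps from nonadjacency
  have gqr := gap_of_disjoint hxq hxr (fun h => hqr ((hadj q r hQR).mpr h))
  have gqs := gap_of_disjoint hxq hxs (fun h => hqs ((hadj q s hQS).mpr h))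
  have grs := gap_of_disjoint hxr hxs (fun h => hrs ((hadj r s hRS).mpr h))
  rw [le_abs] at gqr gqs grs
  have key : ∀ {sa sc : Set ℝ} {xa xc : ℝ}, UnitIntervalAt sa xa →
      UnitIntervalAt sc xc → xa + 2 ≤ xc →
      (I p ∩ sa).Nonempty → (I p ∩ sc).Nonempty →
      (I t ∩ sa).Nonempty → (I t ∩ sc).Nonempty → False := by
    intro sa sc xa xc ha hc hg h1 h2 h3 h4
    have hP := forced_Icc hxp ha hc hg h1 h2
    have hT := forced_Icc hxt ha hc hg h3 h4
    exact npt ⟨xa + 1, by rw [hP]; constructor <;> simp <;> linarith,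
      by rw [hT]; constructor <;> simp <;> linarith⟩
  simp only [neg_sub] at gqr gqs grs
  rcases gqr with h1 | h1 <;> rcases gqs with h2 | h2 <;> rcases grs with h3 | h3
  · exact key hxs hxq (by linarith) nps npq nts ntq
  · exact key hxr hxq (by linarith) npr npq ntr ntq
  · linarith
  · exact key hxr hxs (by linarith) npr nps ntr nts
  · exact key hxs hxr (by linarith) nps npr nts ntr
  · linarith
  · exact key hxq hxr (by linarith) npq npr ntq ntr
  · exact key hxq hxs (by linarith) npq nps ntq nts
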